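/- Every finite connected planar graph in which every vertex has degree 3 and which is bipartite (equivalently, trivalent and orientable so every vertex is a source or sink) has a bounded face with at most 4 sides; i.e., a closed web contains a face which is a vertexless circle, a digon, or a square. -/
import Mathlib


/-- Combinatorial form of: every (nonempty) closed web contains a circle, digon or
square. For a finite connected plane trivalent graph (`3V = 2E`), with face set `F`
(including the unbounded face `u`), Euler's formula `V − E + F = 2`, each edge on
the boundary of two faces (`Σ sides = 2E`), and all faces having an even number of
sides (bipartiteness), there is a bounded face with at most 4 sides. -/
theorem closed_web_has_small_face
    (V E : ℕ) (F : Type*) [Fintype F] (u : F) (sides : F → ℕ)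
    (hEuler : (V : ℤ) - (E : ℤ) + (Fintype.card F : ℤ) = 2)
    (htrivalent : 3 * V = 2 * E)
    (hsum : ∑ f : F, sides f = 2 * E)
    (heven : ∀ f : F, Even (sides f)) :
    ∃ f : F, f ≠ u ∧ sides f ≤ 4 := by
  classical
  by_contra h
  push_neg at h
  have h6 : ∀ f ∈ Finset.univ.erase u, 6 ≤ sides f := by
    intro f hf
    have hne := Finset.ne_of_mem_erase hf
    have h5 := h f hne
    obtain ⟨k, hk⟩ := heven f
    omega
  have hsumge : (Finset.univ.erase u).card • 6 ≤ ∑ f ∈ Finset.univ.erase u, sides f :=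
    Finset.card_nsmul_le_sum _ _ _ h6
  rw [smul_eq_mul] at hsumge
  have hcard : (Finset.univ.erase u).card = Fintype.card F - 1 := by
    rw [Finset.card_erase_of_mem (Finset.mem_univ u), Finset.card_univ]
  have hsub : ∑ f ∈ Finset.univ.erase u, sides f ≤ 2 * E := by
    rw [← hsum]
    exact Finset.sum_le_sum_of_subset (Finset.subset_univ _)
  have hpos : 1 ≤ Fintype.card F := Fintype.card_pos_iff.mpr ⟨u⟩
  omega
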